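/- arXiv:1508.03754 — 5 statements merged into one kernel-verified Lean document; each statement's English description precedes it below -/
import Mathlib

section
/- Let M be a positive semi-definite block matrix M = [[A, X], [X*, B]] with A an n×n positive semi-definite matrix and B an m×m positive semi-definite matrix. Then there exist unitary matrices U, V of size (n+m)×(n+m) such that M = U (A ⊕ 0) U* + V (0 ⊕ B) V*. -/
/-!
Write `M = T * T` with `T = √M` hermitian and let `P` be the orthogonal projection onto the first
block. Then `M = S₁ * S₁ᴴ + S₂ * S₂ᴴ` for `S₁ = T * P`, `S₂ = T * (1 - P)`, while
`S₁ᴴ * S₁ = P * M * P = A ⊕ 0` and `S₂ᴴ * S₂ = 0 ⊕ B`. Finally `S * Sᴴ` and `Sᴴ * S` are unitarily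
similar for every square `S`: both are hermitian with the same characteristic polynomial.
-/

open Matrix ComplexOrder

namespace Matrix

variable {𝕜 ι : Type*} [RCLike 𝕜] [Fintype ι] [DecidableEq ι]

theorem IsHermitian.exists_unitary_conj_of_charpoly_eq {H K : Matrix ι ι 𝕜} (hH : H.IsHermitian)
    (hK : K.IsHermitian) (h : H.charpoly = K.charpoly) :
    ∃ U : unitaryGroup ι 𝕜, H = (U : Matrix ι ι 𝕜) * K * (U : Matrix ι ι 𝕜)ᴴ := by
  have hD := (hH.eigenvalues_eq_eigenvalues_iff hK).mpr h
  refine ⟨hH.eigenvectorUnitary * star hK.eigenvectorUnitary, ?_⟩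
  calc H = Unitary.conjStarAlgAut 𝕜 _ hH.eigenvectorUnitary
        (Unitary.conjStarAlgAut 𝕜 _ (star hK.eigenvectorUnitary) K) := by
        rw [hK.conjStarAlgAut_star_eigenvectorUnitary, ← hD]
        exact hH.spectral_theorem
    _ = _ := by
        rw [← Unitary.conjStarAlgAut_mul_apply, Unitary.conjStarAlgAut_apply,
          star_eq_conjTranspose]

theorem exists_unitary_mul_conjTranspose_eq (S : Matrix ι ι 𝕜) :
    ∃ U : unitaryGroup ι 𝕜, S * Sᴴ = (U : Matrix ι ι 𝕜) * (Sᴴ * S) * (U : Matrix ι ι 𝕜)ᴴ :=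
  (isHermitian_mul_conjTranspose_self S).exists_unitary_conj_of_charpoly_eq
    (isHermitian_conjTranspose_mul_self S) (charpoly_mul_comm _ _)

open scoped MatrixOrder in
theorem PosSemidef.exists_unitary_conj_add_conj {M P : Matrix ι ι 𝕜} (hM : M.PosSemidef)
    (hP : IsStarProjection P) :
    ∃ U V : unitaryGroup ι 𝕜, M = (U : Matrix ι ι 𝕜) * (P * M * P) * (U : Matrix ι ι 𝕜)ᴴ +
      (V : Matrix ι ι 𝕜) * ((1 - P) * M * (1 - P)) * (V : Matrix ι ι 𝕜)ᴴ := by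
  set T := CFC.sqrt M
  have hT : Tᴴ = T := (CFC.sqrt_nonneg M).posSemidef.1
  have hTT : T * T = M := CFC.sqrt_mul_sqrt_self M hM.nonneg
  have compress : ∀ Q : Matrix ι ι 𝕜, IsStarProjection Q →
      (T * Q) * (T * Q)ᴴ = T * Q * T ∧ (T * Q)ᴴ * (T * Q) = Q * M * Q := by
    intro Q hQ
    have hQ' : Qᴴ = Q := hQ.isSelfAdjoint
    have hQQ : ∀ Y : Matrix ι ι 𝕜, Q * (Q * Y) = Q * Y := fun Y => by
      rw [← mul_assoc, hQ.isIdempotentElem.eq]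
    rw [conjTranspose_mul, hT, hQ', ← hTT]
    constructor <;> simp only [mul_assoc, hQQ]
  obtain ⟨hP₁, hP₂⟩ := compress P hP
  obtain ⟨hQ₁, hQ₂⟩ := compress (1 - P) hP.one_sub
  obtain ⟨U, hU⟩ := exists_unitary_mul_conjTranspose_eq (T * P)
  obtain ⟨V, hV⟩ := exists_unitary_mul_conjTranspose_eq (T * (1 - P))
  refine ⟨U, V, ?_⟩
  rw [← hP₂, ← hQ₂, ← hU, ← hV, hP₁, hQ₁, ← hTT]
  noncomm_ring

end Matrix

theorem decomposition_lemma_general (n m : ℕ)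
    (A : Matrix (Fin n) (Fin n) ℂ) (B : Matrix (Fin m) (Fin m) ℂ)
    (X : Matrix (Fin n) (Fin m) ℂ)
    (hM : (fromBlocks A X Xᴴ B).PosSemidef) :
    ∃ U V : Matrix.unitaryGroup (Fin n ⊕ Fin m) ℂ,
      fromBlocks A X Xᴴ B =
        (U : Matrix (Fin n ⊕ Fin m) (Fin n ⊕ Fin m) ℂ) * fromBlocks A 0 0 0 * (U : Matrix _ _ ℂ)ᴴ +
        (V : Matrix (Fin n ⊕ Fin m) (Fin n ⊕ Fin m) ℂ) * fromBlocks 0 0 0 B * (V : Matrix _ _ ℂ)ᴴ := by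
  have hP : IsStarProjection (fromBlocks 1 0 0 0 : Matrix (Fin n ⊕ Fin m) (Fin n ⊕ Fin m) ℂ) := by
    simp [isStarProjection_iff', fromBlocks_multiply, star_eq_conjTranspose,
      fromBlocks_conjTranspose]
  have h1P : (1 - fromBlocks 1 0 0 0 : Matrix (Fin n ⊕ Fin m) (Fin n ⊕ Fin m) ℂ) =
      fromBlocks 0 0 0 1 := by
    rw [← fromBlocks_one, sub_eq_add_neg, fromBlocks_neg, fromBlocks_add]
    simp
  obtain ⟨U, V, h⟩ := hM.exists_unitary_conj_add_conj hP
  refine ⟨U, V, ?_⟩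
  simpa only [h1P, fromBlocks_multiply, Matrix.mul_zero, Matrix.zero_mul, Matrix.one_mul,
    Matrix.mul_one, add_zero, zero_add] using h

theorem decomposition_lemma (n m : ℕ)
    (A : Matrix (Fin n) (Fin n) ℂ) (B : Matrix (Fin m) (Fin m) ℂ)
    (X : Matrix (Fin n) (Fin m) ℂ)
    (hM : (fromBlocks A X Xᴴ B).PosSemidef)
    (hA : A.PosSemidef) (hB : B.PosSemidef) :
    ∃ U V : Matrix.unitaryGroup (Fin n ⊕ Fin m) ℂ,
      fromBlocks A X Xᴴ B =
        (U : Matrix (Fin n ⊕ Fin m) (Fin n ⊕ Fin m) ℂ) * fromBlocks A 0 0 0 * (U : Matrix _ _ ℂ)ᴴ +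
        (V : Matrix (Fin n ⊕ Fin m) (Fin n ⊕ Fin m) ℂ) * fromBlocks 0 0 0 B * (V : Matrix _ _ ℂ)ᴴ :=
  decomposition_lemma_general n m A B X hM
end

section
/- Let M = [[A, X], [X*, B]] be a positive semi-definite block matrix with A ∈ M_n^+ and B ∈ M_m^+. Then for every unitarily invariant norm ‖·‖, ‖M‖ ≤ ‖A ⊕ 0‖ + ‖0 ⊕ B‖. -/
/-!
Write `M = T * T` with `T = √M` Hermitian and let `P` be the projection onto the first summand,
so that `M = T P T + T (1 - P) T`. Since `T P T = (P T)ᴴ (P T)` while `P M P = (P T) (P T)ᴴ`, and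
`Sᴴ S`, `S Sᴴ` are Hermitian with the same characteristic polynomial, hence unitarily similar,
unitary invariance gives `f (T P T) = f (P M P) = f (A ⊕ 0)`; likewise for `B`, and the triangle
inequality concludes.
-/

open Matrix ComplexOrder

section

variable {𝕜 N : Type*} [RCLike 𝕜] [Fintype N] [DecidableEq N]

-- Both matrices are unitarily similar to the diagonal matrix of their sorted eigenvalues.
theorem Matrix.IsHermitian.exists_unitary_conj_eq_of_charpoly_eq {A B : Matrix N N 𝕜}
    (hA : A.IsHermitian) (hB : B.IsHermitian) (h : A.charpoly = B.charpoly) :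
    ∃ U : unitaryGroup N 𝕜, (U : Matrix N N 𝕜) * A * star (U : Matrix N N 𝕜) = B := by
  obtain ⟨uA, rfl⟩ : ∃ u : unitaryGroup N 𝕜,
      A = Unitary.conjStarAlgAut 𝕜 _ u (diagonal (RCLike.ofReal ∘ hB.eigenvalues)) :=
    ⟨_, (hA.eigenvalues_eq_eigenvalues_iff hB).2 h ▸ hA.spectral_theorem⟩
  refine ⟨hB.eigenvectorUnitary * star uA, ?_⟩
  calc _ = Unitary.conjStarAlgAut 𝕜 _ (hB.eigenvectorUnitary * star uA)
          (Unitary.conjStarAlgAut 𝕜 _ uA (diagonal (RCLike.ofReal ∘ hB.eigenvalues))) := rfl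
    _ = B := by
      rw [Unitary.conjStarAlgAut_mul_apply, ← Unitary.conjStarAlgAut_symm,
        StarAlgEquiv.symm_apply_apply, ← hB.spectral_theorem]

theorem apply_conjTranspose_mul_self_eq (f : Matrix N N 𝕜 → ℝ)
    (hf_inv : ∀ (T : Matrix N N 𝕜) (U V : unitaryGroup N 𝕜),
      f ((U : Matrix N N 𝕜) * T * (V : Matrix N N 𝕜)) = f T)
    (S : Matrix N N 𝕜) : f (Sᴴ * S) = f (S * Sᴴ) := by
  obtain ⟨U, hU⟩ := (isHermitian_conjTranspose_mul_self S).exists_unitary_conj_eq_of_charpoly_eq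
    (isHermitian_mul_conjTranspose_self S) (charpoly_mul_comm _ _)
  rw [← hU]
  exact (hf_inv _ U (star U)).symm

open scoped MatrixOrder in
theorem le_add_compression_of_posSemidef (f : Matrix N N 𝕜 → ℝ)
    (hf_add : ∀ S T, f (S + T) ≤ f S + f T)
    (hf_inv : ∀ (T : Matrix N N 𝕜) (U V : unitaryGroup N 𝕜),
      f ((U : Matrix N N 𝕜) * T * (V : Matrix N N 𝕜)) = f T)
    {M P : Matrix N N 𝕜} (hM : M.PosSemidef) (hP : IsStarProjection P) :
    f M ≤ f (P * M * P) + f ((1 - P) * M * (1 - P)) := by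
  set T := CFC.sqrt M
  have hTT : T * T = M := CFC.sqrt_mul_sqrt_self M hM.nonneg
  have hT : Tᴴ = T := (CFC.sqrt_nonneg M).posSemidef.isHermitian
  have compression : ∀ Q : Matrix N N 𝕜, IsStarProjection Q → f (T * Q * T) = f (Q * M * Q) := by
    intro Q hQ
    have hQ' : Qᴴ = Q := hQ.isSelfAdjoint
    calc f (T * Q * T) = f ((Q * T)ᴴ * (Q * T)) := by
          rw [conjTranspose_mul, hT, hQ', ← mul_assoc, mul_assoc T Q Q, hQ.isIdempotentElem.eq]
      _ = f ((Q * T) * (Q * T)ᴴ) := apply_conjTranspose_mul_self_eq f hf_inv _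
      _ = f (Q * M * Q) := by rw [conjTranspose_mul, hT, hQ', ← hTT]; simp only [mul_assoc]
  calc f M = f (T * P * T + T * (1 - P) * T) := by
        rw [← add_mul, ← mul_add, add_sub_cancel, mul_one, hTT]
    _ ≤ f (T * P * T) + f (T * (1 - P) * T) := hf_add _ _
    _ = f (P * M * P) + f ((1 - P) * M * (1 - P)) := by
        rw [compression P hP, compression (1 - P) hP.one_sub]

end

theorem norm_sub_additive_blocks_general (n m : ℕ)
    (A : Matrix (Fin n) (Fin n) ℂ) (B : Matrix (Fin m) (Fin m) ℂ)
    (X : Matrix (Fin n) (Fin m) ℂ)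
    (hM : (fromBlocks A X Xᴴ B).PosSemidef)
    (f : Matrix (Fin n ⊕ Fin m) (Fin n ⊕ Fin m) ℂ → ℝ)
    (hf_add : ∀ S T, f (S + T) ≤ f S + f T)
    (hf_inv : ∀ (T : Matrix (Fin n ⊕ Fin m) (Fin n ⊕ Fin m) ℂ)
      (U V : Matrix.unitaryGroup (Fin n ⊕ Fin m) ℂ),
      f ((U : Matrix _ _ ℂ) * T * (V : Matrix _ _ ℂ)) = f T) :
    f (fromBlocks A X Xᴴ B) ≤ f (fromBlocks A 0 0 0) + f (fromBlocks 0 0 0 B) := by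
  set P : Matrix (Fin n ⊕ Fin m) (Fin n ⊕ Fin m) ℂ := fromBlocks 1 0 0 0
  have hP : IsStarProjection P :=
    ⟨by simp [IsIdempotentElem, P, fromBlocks_multiply],
      by simp [IsSelfAdjoint, P, star_eq_conjTranspose, fromBlocks_conjTranspose]⟩
  have hQ : 1 - P = fromBlocks 0 0 0 1 := by
    rw [sub_eq_iff_eq_add', fromBlocks_add, ← fromBlocks_one]; simp
  simpa [hQ, P, fromBlocks_multiply] using le_add_compression_of_posSemidef f hf_add hf_inv hM hP

theorem norm_sub_additive_blocks (n m : ℕ)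
    (A : Matrix (Fin n) (Fin n) ℂ) (B : Matrix (Fin m) (Fin m) ℂ)
    (X : Matrix (Fin n) (Fin m) ℂ)
    (hM : (fromBlocks A X Xᴴ B).PosSemidef)
    (hA : A.PosSemidef) (hB : B.PosSemidef)
    (f : Matrix (Fin n ⊕ Fin m) (Fin n ⊕ Fin m) ℂ → ℝ)
    (hf_nonneg : ∀ T, 0 ≤ f T)
    (hf_smul : ∀ (c : ℂ) T, f (c • T) = ‖c‖ * f T)
    (hf_add : ∀ S T, f (S + T) ≤ f S + f T)
    (hf_inv : ∀ (T : Matrix (Fin n ⊕ Fin m) (Fin n ⊕ Fin m) ℂ)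
      (U V : Matrix.unitaryGroup (Fin n ⊕ Fin m) ℂ),
      f ((U : Matrix _ _ ℂ) * T * (V : Matrix _ _ ℂ)) = f T) :
    f (fromBlocks A X Xᴴ B) ≤ f (fromBlocks A 0 0 0) + f (fromBlocks 0 0 0 B) :=
  norm_sub_additive_blocks_general n m A B X hM f hf_add hf_inv
end

section
/- Let M = [[A, X], [X*, B]] ∈ M_{2n}^+ be positive semi-definite with all blocks of size n×n. Then there exist unitary matrices U, V ∈ M_{2n} such that M = U ((A+B)/2 − Re(X)) ⊕ 0) U* + V (0 ⊕ ((A+B)/2 + Re(X))) V*. -/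
/-!
Conjugating by the unitary `(1/√2) [[1, -1], [1, 1]]` turns `M` into a positive semidefinite block
matrix whose diagonal blocks are `(A + B)/2 ∓ Re X`. Any positive semidefinite block matrix
`N = T²` (with `T = √N`) splits along the coordinate projections `E₁ + E₂ = 1` as
`N = S₁S₁* + S₂S₂*`, `Sᵢ = TEᵢ`. Each `SᵢSᵢ*` is unitarily similar to `Sᵢ*Sᵢ = EᵢNEᵢ`, the `i`-th
diagonal block of `N` padded by zeros, because Hermitian matrices with the same characteristic
polynomial are unitarily similar.
-/

open Unitary ComplexOrder

namespace RCLike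

variable {𝕜 : Type*} [RCLike 𝕜]

theorem inv_ofReal_sqrt_two_mul_self : ((√2 : ℝ) : 𝕜)⁻¹ * ((√2 : ℝ) : 𝕜)⁻¹ = 1 / 2 := by
  rw [← mul_inv, ← ofReal_mul, Real.mul_self_sqrt zero_le_two, ofReal_ofNat, one_div]

theorem star_inv_ofReal_sqrt_two : star ((√2 : ℝ) : 𝕜)⁻¹ = ((√2 : ℝ) : 𝕜)⁻¹ := by
  simp

end RCLike

namespace Matrix

open RCLike

variable {𝕜 : Type*} [RCLike 𝕜]

section UnitarySimilarity

variable {n : Type*} [Fintype n] [DecidableEq n]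

theorem IsHermitian.exists_eq_conjStarAlgAut_of_charpoly_eq {A B : Matrix n n 𝕜}
    (hA : A.IsHermitian) (hB : B.IsHermitian) (h : A.charpoly = B.charpoly) :
    ∃ W : unitaryGroup n 𝕜, A = conjStarAlgAut 𝕜 _ W B := by
  have hAB := (hA.eigenvalues_eq_eigenvalues_iff hB).mpr h
  refine ⟨hA.eigenvectorUnitary * star hB.eigenvectorUnitary, ?_⟩
  rw [conjStarAlgAut_mul_apply, hB.conjStarAlgAut_star_eigenvectorUnitary, ← hAB,
    ← hA.spectral_theorem]

theorem exists_mul_conjTranspose_self_eq_conjStarAlgAut (S : Matrix n n 𝕜) :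
    ∃ W : unitaryGroup n 𝕜, S * Sᴴ = conjStarAlgAut 𝕜 _ W (Sᴴ * S) :=
  (isHermitian_mul_conjTranspose_self S).exists_eq_conjStarAlgAut_of_charpoly_eq
    (isHermitian_conjTranspose_mul_self S) (charpoly_mul_comm _ _)

theorem IsHermitian.exists_mul_mul_eq_conjStarAlgAut {T E : Matrix n n 𝕜} (hT : T.IsHermitian)
    (hE : E.IsHermitian) (hEE : E * E = E) :
    ∃ W : unitaryGroup n 𝕜, T * E * T = conjStarAlgAut 𝕜 _ W (E * (T * T) * E) := by
  obtain ⟨W, hW⟩ := exists_mul_conjTranspose_self_eq_conjStarAlgAut (T * E)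
  have hEE' (X : Matrix n n 𝕜) : E * (E * X) = E * X := by rw [← mul_assoc, hEE]
  exact ⟨W, by simpa only [conjTranspose_mul, hT.eq, hE.eq, mul_assoc, hEE'] using hW⟩

end UnitarySimilarity

open scoped MatrixOrder in
theorem PosSemidef.exists_fromBlocks_eq_add {k l : Type*} [Fintype k] [Fintype l]
    [DecidableEq k] [DecidableEq l] {C : Matrix k k 𝕜} {Y : Matrix k l 𝕜} {Z : Matrix l k 𝕜}
    {D : Matrix l l 𝕜} (hM : (fromBlocks C Y Z D).PosSemidef) :
    ∃ W₁ W₂ : unitaryGroup (k ⊕ l) 𝕜, fromBlocks C Y Z D =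
      conjStarAlgAut 𝕜 _ W₁ (fromBlocks C 0 0 0) + conjStarAlgAut 𝕜 _ W₂ (fromBlocks 0 0 0 D) := by
  set T := CFC.sqrt (fromBlocks C Y Z D)
  have hT : T.IsHermitian := (nonneg_iff_posSemidef.mp (CFC.sqrt_nonneg _)).isHermitian
  have hTT : T * T = fromBlocks C Y Z D := CFC.sqrt_mul_sqrt_self _ hM.nonneg
  obtain ⟨W₁, hW₁⟩ := hT.exists_mul_mul_eq_conjStarAlgAut (E := fromBlocks 1 0 0 0)
    (by simp [IsHermitian, fromBlocks_conjTranspose]) (by simp [fromBlocks_multiply])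
  obtain ⟨W₂, hW₂⟩ := hT.exists_mul_mul_eq_conjStarAlgAut (E := fromBlocks 0 0 0 1)
    (by simp [IsHermitian, fromBlocks_conjTranspose]) (by simp [fromBlocks_multiply])
  have hsplit : fromBlocks C Y Z D =
      T * fromBlocks 1 0 0 0 * T + T * fromBlocks 0 0 0 1 * T := by
    rw [← add_mul, ← mul_add, fromBlocks_add]
    simp only [add_zero, zero_add, fromBlocks_one, mul_one, hTT]
  refine ⟨W₁, W₂, ?_⟩
  rw [hsplit, hW₁, hW₂, hTT]
  simp [fromBlocks_multiply]

section BlockHadamard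

variable (n : Type*) [Fintype n] [DecidableEq n]

theorem inv_sqrt_two_smul_fromBlocks_mem_unitaryGroup :
    ((√2 : ℝ) : 𝕜)⁻¹ • fromBlocks (1 : Matrix n n 𝕜) (-1) 1 1 ∈ unitaryGroup (n ⊕ n) 𝕜 := by
  rw [mem_unitaryGroup_iff, star_eq_conjTranspose, conjTranspose_smul, star_inv_ofReal_sqrt_two,
    smul_mul_smul, inv_ofReal_sqrt_two_mul_self, fromBlocks_conjTranspose, fromBlocks_multiply,
    fromBlocks_smul, ← fromBlocks_one]
  simp only [conjTranspose_one, conjTranspose_neg, mul_one, mul_neg, neg_neg, add_neg_cancel]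
  congr 1 <;> module

noncomputable def blockHadamard : unitaryGroup (n ⊕ n) 𝕜 :=
  ⟨((√2 : ℝ) : 𝕜)⁻¹ • fromBlocks 1 (-1) 1 1, inv_sqrt_two_smul_fromBlocks_mem_unitaryGroup n⟩

variable {n}

theorem inv_sqrt_two_smul_fromBlocks_mul_fromBlocks_mul_conjTranspose (A X Y B : Matrix n n 𝕜) :
    (((√2 : ℝ) : 𝕜)⁻¹ • fromBlocks 1 (-1) 1 1) * fromBlocks A X Y B *
        (((√2 : ℝ) : 𝕜)⁻¹ • fromBlocks 1 (-1) 1 1)ᴴ =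
      fromBlocks ((1/2 : 𝕜) • (A + B) - (1/2 : 𝕜) • (X + Y)) ((1/2 : 𝕜) • (A - B + X - Y))
        ((1/2 : 𝕜) • (A - B - X + Y)) ((1/2 : 𝕜) • (A + B) + (1/2 : 𝕜) • (X + Y)) := by
  rw [conjTranspose_smul, star_inv_ofReal_sqrt_two, Matrix.smul_mul, Matrix.smul_mul,
    Matrix.mul_smul, smul_smul, inv_ofReal_sqrt_two_mul_self, fromBlocks_conjTranspose,
    fromBlocks_multiply, fromBlocks_multiply, fromBlocks_smul]
  simp only [conjTranspose_one, conjTranspose_neg, mul_one, one_mul, mul_neg, neg_mul]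
  congr 1 <;> module

-- Proved through the underlying matrix: rewriting inside the `conjStarAlgAut` form times out.
theorem conjStarAlgAut_blockHadamard_fromBlocks (A X Y B : Matrix n n 𝕜) :
    conjStarAlgAut 𝕜 _ (blockHadamard n) (fromBlocks A X Y B) =
      fromBlocks ((1/2 : 𝕜) • (A + B) - (1/2 : 𝕜) • (X + Y)) ((1/2 : 𝕜) • (A - B + X - Y))
        ((1/2 : 𝕜) • (A - B - X + Y)) ((1/2 : 𝕜) • (A + B) + (1/2 : 𝕜) • (X + Y)) :=
  inv_sqrt_two_smul_fromBlocks_mul_fromBlocks_mul_conjTranspose A X Y B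

end BlockHadamard

end Matrix

open Matrix ComplexOrder

theorem decomposition_real_part (n : ℕ)
    (A B : Matrix (Fin n) (Fin n) ℂ) (X : Matrix (Fin n) (Fin n) ℂ)
    (hM : (fromBlocks A X Xᴴ B).PosSemidef) :
    ∃ U V : Matrix.unitaryGroup (Fin n ⊕ Fin n) ℂ,
      fromBlocks A X Xᴴ B =
        (U : Matrix _ _ ℂ) * fromBlocks ((1/2 : ℂ) • (A + B) - (1/2 : ℂ) • (X + Xᴴ)) 0 0 0 * (U : Matrix _ _ ℂ)ᴴ +
        (V : Matrix _ _ ℂ) * fromBlocks 0 0 0 ((1/2 : ℂ) • (A + B) + (1/2 : ℂ) • (X + Xᴴ)) * (V : Matrix _ _ ℂ)ᴴ := by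
  set H := blockHadamard (𝕜 := ℂ) (Fin n)
  have hN : (conjStarAlgAut ℂ _ H (fromBlocks A X Xᴴ B)).PosSemidef :=
    hM.mul_mul_conjTranspose_same _
  rw [conjStarAlgAut_blockHadamard_fromBlocks] at hN
  obtain ⟨W₁, W₂, hW⟩ := hN.exists_fromBlocks_eq_add
  rw [← conjStarAlgAut_blockHadamard_fromBlocks] at hW
  have hM' := congrArg (conjStarAlgAut ℂ _ (star H)) hW
  rw [map_add, ← conjStarAlgAut_mul_apply, ← conjStarAlgAut_mul_apply, ← conjStarAlgAut_mul_apply,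
    Unitary.star_mul_self, map_one, StarAlgEquiv.one_apply] at hM'
  exact ⟨star H * W₁, star H * W₂, hM'⟩
end

section
/- Let M = [[A, X], [X*, B]] ∈ M_{2n}^+ be positive semi-definite with all blocks of size n×n. Then there exist unitary matrices U, V ∈ M_{2n} such that M = U (((A+B)/2 + Im(X)) ⊕ 0) U* + V (0 ⊕ ((A+B)/2 − Im(X))) V*. -/
/-!
Conjugating by the unitary `W = (1/√2) [[1, 1], [-i, i]]` turns `M` into a positive semidefinite
`N` whose diagonal blocks are `(A + B)/2 ± Im X`. Write `N = K * K` with `K` Hermitian and split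
`K = [P Q]` into column blocks. Then `N = K K* = P P* + Q Q*`, while the diagonal blocks of
`N = K* K` are `P* P` and `Q* Q`. Finally `P P* = T T*` for `T = [P 0]` is unitarily similar to
`T* T = P* P ⊕ 0`, because `T T*` and `T* T` are Hermitian with the same characteristic
polynomial; likewise `Q Q*` is unitarily similar to `0 ⊕ Q* Q`.
-/

open Matrix ComplexOrder Complex

namespace Matrix

variable {𝕜 : Type*} [RCLike 𝕜] {n : Type*} [Fintype n] [DecidableEq n]

theorem IsHermitian.exists_unitary_eq_of_charpoly_eq {A B : Matrix n n 𝕜}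
    (hA : A.IsHermitian) (hB : B.IsHermitian) (h : A.charpoly = B.charpoly) :
    ∃ U : unitaryGroup n 𝕜, A = (U : Matrix n n 𝕜) * B * (U : Matrix n n 𝕜)ᴴ := by
  have hD : diagonal (RCLike.ofReal ∘ hA.eigenvalues) =
      Unitary.conjStarAlgAut 𝕜 _ (star hB.eigenvectorUnitary) B := by
    rw [(hA.eigenvalues_eq_eigenvalues_iff hB).mpr h, hB.conjStarAlgAut_star_eigenvectorUnitary]
  refine ⟨hA.eigenvectorUnitary * star hB.eigenvectorUnitary, ?_⟩
  conv_lhs => rw [hA.spectral_theorem, hD, ← Unitary.conjStarAlgAut_mul_apply]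
  rfl

theorem exists_unitary_mul_conjTranspose_self_eq (T : Matrix n n 𝕜) :
    ∃ U : unitaryGroup n 𝕜, T * Tᴴ = (U : Matrix n n 𝕜) * (Tᴴ * T) * (U : Matrix n n 𝕜)ᴴ :=
  (isHermitian_mul_conjTranspose_self T).exists_unitary_eq_of_charpoly_eq
    (isHermitian_conjTranspose_mul_self T) (charpoly_mul_comm T Tᴴ)

variable {m m' : Type*} [Fintype m] [DecidableEq m] [Fintype m'] [DecidableEq m']

theorem exists_unitary_mul_conjTranspose_self_eq_fromBlocks_left (P : Matrix (m ⊕ m') m 𝕜) :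
    ∃ U : unitaryGroup (m ⊕ m') 𝕜, P * Pᴴ =
      (U : Matrix (m ⊕ m') (m ⊕ m') 𝕜) * fromBlocks (Pᴴ * P) 0 0 0 * (U : Matrix _ _ 𝕜)ᴴ := by
  simpa only [conjTranspose_fromCols_eq_fromRows_conjTranspose, conjTranspose_zero,
    fromCols_mul_fromRows, fromRows_mul_fromCols, Matrix.mul_zero, Matrix.zero_mul, add_zero]
    using exists_unitary_mul_conjTranspose_self_eq (fromCols P 0)

theorem exists_unitary_mul_conjTranspose_self_eq_fromBlocks_right (Q : Matrix (m ⊕ m') m' 𝕜) :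
    ∃ U : unitaryGroup (m ⊕ m') 𝕜, Q * Qᴴ =
      (U : Matrix (m ⊕ m') (m ⊕ m') 𝕜) * fromBlocks 0 0 0 (Qᴴ * Q) * (U : Matrix _ _ 𝕜)ᴴ := by
  simpa only [conjTranspose_fromCols_eq_fromRows_conjTranspose, conjTranspose_zero,
    fromCols_mul_fromRows, fromRows_mul_fromCols, Matrix.mul_zero, Matrix.zero_mul, zero_add]
    using exists_unitary_mul_conjTranspose_self_eq (fromCols 0 Q)

theorem exists_unitary_mul_conjTranspose_self_eq_add (K : Matrix (m ⊕ m') (m ⊕ m') 𝕜) :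
    ∃ U V : unitaryGroup (m ⊕ m') 𝕜, K * Kᴴ =
      (U : Matrix (m ⊕ m') (m ⊕ m') 𝕜) * fromBlocks (Kᴴ * K).toBlocks₁₁ 0 0 0 *
          (U : Matrix _ _ 𝕜)ᴴ +
        (V : Matrix (m ⊕ m') (m ⊕ m') 𝕜) * fromBlocks 0 0 0 (Kᴴ * K).toBlocks₂₂ *
          (V : Matrix _ _ 𝕜)ᴴ := by
  obtain ⟨U, hU⟩ := exists_unitary_mul_conjTranspose_self_eq_fromBlocks_left K.toCols₁
  obtain ⟨V, hV⟩ := exists_unitary_mul_conjTranspose_self_eq_fromBlocks_right K.toCols₂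
  refine ⟨U, V, ?_⟩
  rw [← fromCols_toCols K]
  simp only [conjTranspose_fromCols_eq_fromRows_conjTranspose, fromCols_mul_fromRows,
    fromRows_mul_fromCols, toBlocks_fromBlocks₁₁, toBlocks_fromBlocks₂₂, hU, hV]

open scoped MatrixOrder in
theorem PosSemidef.exists_unitary_eq_add_fromBlocks {N : Matrix (m ⊕ m') (m ⊕ m') 𝕜}
    (hN : N.PosSemidef) :
    ∃ U V : unitaryGroup (m ⊕ m') 𝕜, N =
      (U : Matrix (m ⊕ m') (m ⊕ m') 𝕜) * fromBlocks N.toBlocks₁₁ 0 0 0 * (U : Matrix _ _ 𝕜)ᴴ +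
        (V : Matrix (m ⊕ m') (m ⊕ m') 𝕜) * fromBlocks 0 0 0 N.toBlocks₂₂ *
          (V : Matrix _ _ 𝕜)ᴴ := by
  have hK : (CFC.sqrt N)ᴴ = CFC.sqrt N := (CFC.sqrt_nonneg N).posSemidef.isHermitian
  have hKK : CFC.sqrt N * CFC.sqrt N = N := CFC.sqrt_mul_sqrt_self N hN.nonneg
  simpa only [hK, hKK] using exists_unitary_mul_conjTranspose_self_eq_add (CFC.sqrt N)

end Matrix

lemma sqrt_two_inv_mul_self : ((√2 : ℝ) : ℂ)⁻¹ * ((√2 : ℝ) : ℂ)⁻¹ = 1 / 2 := by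
  rw [← mul_inv, ← ofReal_mul, Real.mul_self_sqrt zero_le_two]; norm_num

section imagMixing

variable (m : Type*) [DecidableEq m]

noncomputable def imagMixing : Matrix (m ⊕ m) (m ⊕ m) ℂ :=
  ((√2 : ℝ) : ℂ)⁻¹ • fromBlocks 1 1 (-I • 1) (I • 1)

variable {m}

lemma conjTranspose_imagMixing :
    (imagMixing m)ᴴ = ((√2 : ℝ) : ℂ)⁻¹ • fromBlocks 1 (I • 1) 1 (-I • 1) := by
  simp [imagMixing, fromBlocks_conjTranspose, conjTranspose_smul]

variable [Fintype m]

lemma imagMixing_mem_unitaryGroup : imagMixing m ∈ unitaryGroup (m ⊕ m) ℂ := by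
  rw [mem_unitaryGroup_iff, star_eq_conjTranspose, conjTranspose_imagMixing, imagMixing,
    smul_mul_smul_comm, sqrt_two_inv_mul_self, fromBlocks_multiply, ← fromBlocks_one]
  simp only [Matrix.smul_mul, Matrix.mul_smul, Matrix.one_mul, smul_smul, fromBlocks_smul]
  congr 1 <;> match_scalars <;> grind [I_sq, sqrt_two_inv_mul_self]

lemma toBlocks₁₁_conjTranspose_imagMixing_mul (A B X C : Matrix m m ℂ) :
    ((imagMixing m)ᴴ * fromBlocks A X C B * imagMixing m).toBlocks₁₁ =
      (1/2 : ℂ) • (A + B) + (1/(2 * I)) • (X - C) := by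
  rw [conjTranspose_imagMixing, imagMixing]
  simp only [Matrix.smul_mul, Matrix.mul_smul, smul_smul, fromBlocks_multiply, Matrix.one_mul,
    Matrix.mul_one, fromBlocks_smul, toBlocks_fromBlocks₁₁]
  match_scalars <;> grind [I_sq, sqrt_two_inv_mul_self]

lemma toBlocks₂₂_conjTranspose_imagMixing_mul (A B X C : Matrix m m ℂ) :
    ((imagMixing m)ᴴ * fromBlocks A X C B * imagMixing m).toBlocks₂₂ =
      (1/2 : ℂ) • (A + B) - (1/(2 * I)) • (X - C) := by
  rw [conjTranspose_imagMixing, imagMixing]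
  simp only [Matrix.smul_mul, Matrix.mul_smul, smul_smul, fromBlocks_multiply, Matrix.one_mul,
    Matrix.mul_one, fromBlocks_smul, toBlocks_fromBlocks₂₂]
  match_scalars <;> grind [I_sq, sqrt_two_inv_mul_self]

end imagMixing

theorem decomposition_imaginary_part (n : ℕ)
    (A B : Matrix (Fin n) (Fin n) ℂ) (X : Matrix (Fin n) (Fin n) ℂ)
    (hM : (fromBlocks A X Xᴴ B).PosSemidef) :
    ∃ U V : Matrix.unitaryGroup (Fin n ⊕ Fin n) ℂ,
      fromBlocks A X Xᴴ B =
        (U : Matrix _ _ ℂ) *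
          fromBlocks ((1/2 : ℂ) • (A + B) + (1/(2 * Complex.I)) • (X - Xᴴ)) 0 0 0 *
          (U : Matrix _ _ ℂ)ᴴ +
        (V : Matrix _ _ ℂ) *
          fromBlocks 0 0 0 ((1/2 : ℂ) • (A + B) - (1/(2 * Complex.I)) • (X - Xᴴ)) *
          (V : Matrix _ _ ℂ)ᴴ := by
  set W := imagMixing (Fin n)
  have hW : W * Wᴴ = 1 := mem_unitaryGroup_iff.mp imagMixing_mem_unitaryGroup
  obtain ⟨U, V, hUV⟩ := (hM.conjTranspose_mul_mul_same W).exists_unitary_eq_add_fromBlocks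
  rw [toBlocks₁₁_conjTranspose_imagMixing_mul, toBlocks₂₂_conjTranspose_imagMixing_mul] at hUV
  refine ⟨⟨W, imagMixing_mem_unitaryGroup⟩ * U, ⟨W, imagMixing_mem_unitaryGroup⟩ * V, ?_⟩
  calc fromBlocks A X Xᴴ B = W * (Wᴴ * fromBlocks A X Xᴴ B * W) * Wᴴ := by
        simp only [← Matrix.mul_assoc, hW, Matrix.one_mul]
        simp only [Matrix.mul_assoc, hW, Matrix.mul_one]
    _ = _ := by
      rw [hUV]
      simp only [Submonoid.coe_mul, conjTranspose_mul, Matrix.mul_add, Matrix.add_mul,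
        Matrix.mul_assoc]
end

section
/- Let M = [[A, X], [X*, B]] ∈ M_{2n}^+ be positive semi-definite with all blocks of size n×n. Then (A+B)/2 + Im(X) ≥ 0 and (A+B)/2 − Im(X) ≥ 0, where Im(X) = (X − X*)/(2i). -/
open Matrix ComplexOrder

/-!
Compressing `M = [[A, X], [Xᴴ, B]] ≥ 0` by the column `P = [1; c]` gives
`Pᴴ M P = A + c X + c̄ Xᴴ + |c|² B ≥ 0`. For `c = ∓i` this is `A + B ∓ i (X - Xᴴ) = 2 ((A + B)/2 ± Im X)`.
-/

namespace Matrix.PosSemidef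

variable {R n : Type*} [CommRing R] [PartialOrder R] [StarRing R] [Fintype n] [DecidableEq n]

theorem add_smul_add_star_smul_add_smul_of_fromBlocks {A B X : Matrix n n R}
    (hM : (fromBlocks A X Xᴴ B).PosSemidef) (c : R) :
    (A + c • X + star c • Xᴴ + (star c * c) • B).PosSemidef := by
  convert hM.conjTranspose_mul_mul_same (fromRows (1 : Matrix n n R) (c • 1)) using 1
  simp only [conjTranspose_fromRows_eq_fromCols_conjTranspose, fromCols_mul_fromBlocks,
    fromCols_mul_fromRows, conjTranspose_one, conjTranspose_smul, Matrix.one_mul,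
    Matrix.mul_one, Matrix.smul_mul, Matrix.mul_smul]
  module

theorem add_smul_add_star_smul_add_of_fromBlocks {A B X : Matrix n n R}
    (hM : (fromBlocks A X Xᴴ B).PosSemidef) {c : R} (hc : star c * c = 1) :
    (A + c • X + star c • Xᴴ + B).PosSemidef := by
  simpa only [hc, one_smul] using hM.add_smul_add_star_smul_add_smul_of_fromBlocks c

end Matrix.PosSemidef

theorem mean_pm_imaginary_part_psd (n : ℕ)
    (A B : Matrix (Fin n) (Fin n) ℂ) (X : Matrix (Fin n) (Fin n) ℂ)
    (hM : (fromBlocks A X Xᴴ B).PosSemidef) :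
    ((1/2 : ℂ) • (A + B) + (1/(2 * Complex.I)) • (X - Xᴴ)).PosSemidef ∧
    ((1/2 : ℂ) • (A + B) - (1/(2 * Complex.I)) • (X - Xᴴ)).PosSemidef := by
  have hhalf : (0 : ℂ) ≤ 1 / 2 := by positivity
  have inv_two_I : (1 / (2 * Complex.I) : ℂ) = -(Complex.I / 2) := by
    field_simp
    simp
  constructor
  · rw [show (1 / 2 : ℂ) • (A + B) + (1 / (2 * Complex.I)) • (X - Xᴴ) =
        (1 / 2 : ℂ) • (A + (-Complex.I) • X + star (-Complex.I) • Xᴴ + B) by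
      rw [inv_two_I, star_neg, Complex.star_def, Complex.conj_I, neg_neg]; module]
    exact (hM.add_smul_add_star_smul_add_of_fromBlocks (by simp)).smul hhalf
  · rw [show (1 / 2 : ℂ) • (A + B) - (1 / (2 * Complex.I)) • (X - Xᴴ) =
        (1 / 2 : ℂ) • (A + Complex.I • X + star Complex.I • Xᴴ + B) by
      rw [inv_two_I, Complex.star_def, Complex.conj_I]; module]
    exact (hM.add_smul_add_star_smul_add_of_fromBlocks (by simp)).smul hhalf
end
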